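/- Three-variable double-sum symmetry: for positive integers w1, w2, w3, any y ∈ R and n ≥ 0: w3·(w1 w2)^n · Σ_{i=0}^{w1−1} Σ_{j=0}^{w2−1} q^{w2 w3 i + w1 w3 j} · B_{n,q^{w1 w2}}(w3 y + (w3/w1) i + (w3/w2) j) = w1·(w2 w3)^n · Σ_{i=0}^{w2−1} Σ_{j=0}^{w3−1} q^{w1 w3 i + w1 w2 j} · B_{n,q^{w2 w3}}(w1 y + (w1/w2) i + (w1/w3) j). -/

import Mathlib

/-!
Write `u = q·exp t` in the formal power series ring `R⟦t⟧`. The exponential generating function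
of `b^n B_{n,q^b}(x)` (with parameter `bL`) is `b (t + L) e^{bxt} / (u^b - 1)`. Summing the two
geometric series in `u^{bc}` and `u^{ac}`, the generating function of the double sum with weights
`(a, b, c)`, multiplied by `(u^{ab} - 1)(u^{bc} - 1)(u^{ac} - 1)`, becomes
`abc (t + L) e^{abcyt} (u^{abc} - 1)^2`, which is symmetric in `a, b, c`. The factors `u^w - 1`
are units because their constant terms `q^w - 1` are, so both sides of the theorem have the same
generating function.
-/

open Finset

/-- The q-analogue of power sums: `S_{k,q}(m) = Σ_{i=0}^m i^k q^i` (with `0^0 = 1`). -/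
def qS {R : Type*} [CommRing R] (q : R) (k m : ℕ) : R :=
  ∑ i ∈ Finset.range (m + 1), (i : R) ^ k * q ^ i

/-- q-Bernoulli numbers `b_n(q, L)`: `(q-1) b_0 = L` and for `n ≥ 1`,
`(q-1) b_n = [n = 1] - q Σ_{k<n} C(n,k) b_k`. -/
noncomputable def qb {R : Type*} [CommRing R] (q L : R) : ℕ → R
  | 0 => Ring.inverse (q - 1) * L
  | n + 1 =>
      Ring.inverse (q - 1) *
        ((if n + 1 = 1 then (1 : R) else 0) -
          q * ∑ k ∈ (Finset.range (n + 1)).attach,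
              ((n + 1).choose k.1 : R) * qb q L k.1)
  termination_by n => n
  decreasing_by exact Finset.mem_range.mp k.2

/-- q-Bernoulli polynomials `B_{n,q}(x) = Σ_{k=0}^n C(n,k) b_k(q,L) x^{n-k}`. -/
noncomputable def qB {R : Type*} [CommRing R] (q L : R) (n : ℕ) (x : R) : R :=
  ∑ k ∈ Finset.range (n + 1), (n.choose k : R) * qb q L k * x ^ (n - k)

open PowerSeries Nat

section Egf
variable {R : Type*} [CommRing R] [Algebra ℚ R]

noncomputable def egf : (ℕ → R) →ₗ[R] R⟦X⟧ where
  toFun a := mk fun n => algebraMap ℚ R (1 / n !) * a n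
  map_add' a b := by ext; simp [mul_add]
  map_smul' r a := by ext; simp [mul_left_comm]

theorem coeff_egf (a : ℕ → R) (n : ℕ) : coeff n (egf a) = algebraMap ℚ R (1 / n !) * a n :=
  coeff_mk n fun n => algebraMap ℚ R (1 / n !) * a n

theorem egf_injective : Function.Injective (egf : (ℕ → R) → R⟦X⟧) := by
  intro a b h
  funext n
  have hunit : algebraMap ℚ R n ! * algebraMap ℚ R (1 / n !) = 1 := by
    rw [← map_mul, mul_one_div_cancel (by exact_mod_cast n.factorial_ne_zero), map_one]
  have hn := congrArg (fun f => algebraMap ℚ R n ! * coeff n f) h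
  simpa only [coeff_egf, ← mul_assoc, hunit, one_mul] using hn

theorem egf_pow (x : R) : egf (fun n => x ^ n) = rescale x (exp R) := by
  ext n; simp [coeff_egf, mul_comm]

theorem egf_pow_mul (c : R) (a : ℕ → R) : egf (fun n => c ^ n * a n) = rescale c (egf a) := by
  ext n; simp [coeff_egf, mul_left_comm]

theorem egf_binomial_sum (a b : ℕ → R) :
    egf (fun n => ∑ k ∈ range (n + 1), (n.choose k : R) * a k * b (n - k)) = egf a * egf b := by
  ext n
  rw [coeff_mul, Nat.sum_antidiagonal_eq_sum_range_succ_mk, coeff_egf, mul_sum]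
  refine sum_congr rfl fun k hk => ?_
  have hkn : k ≤ n := mem_range_succ_iff.mp hk
  have hfact : (1 / n ! : ℚ) * n.choose k = 1 / k ! * (1 / (n - k)!) := by
    have hchoose : (n.choose k : ℚ) ≠ 0 := by exact_mod_cast (Nat.choose_pos hkn).ne'
    rw [← Nat.choose_mul_factorial_mul_factorial hkn]
    push_cast
    field_simp
  have hR := congrArg (algebraMap ℚ R) hfact
  rw [map_mul, map_mul, map_natCast] at hR
  simp only [coeff_egf]
  linear_combination (a k * b (n - k)) * hR

end Egf

section QBernoulli
variable {R : Type*} [CommRing R] {Q M : R}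

theorem sub_one_mul_qb_zero (hQ : IsUnit (Q - 1)) : (Q - 1) * qb Q M 0 = M := by
  rw [qb, ← mul_assoc, Ring.mul_inverse_cancel _ hQ, one_mul]

theorem sub_one_mul_qb_succ (hQ : IsUnit (Q - 1)) (n : ℕ) :
    (Q - 1) * qb Q M (n + 1) =
      (if n + 1 = 1 then 1 else 0) -
        Q * ∑ k ∈ range (n + 1), ((n + 1).choose k : R) * qb Q M k := by
  rw [qb, ← mul_assoc, Ring.mul_inverse_cancel _ hQ, one_mul,
    sum_attach (range (n + 1)) fun k => ((n + 1).choose k : R) * qb Q M k]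

theorem qb_recurrence (hQ : IsUnit (Q - 1)) (n : ℕ) :
    Q * ∑ k ∈ range (n + 1), (n.choose k : R) * qb Q M k - qb Q M n =
      (if n = 1 then 1 else 0) + (if n = 0 then M else 0) := by
  rcases n with _ | n
  · rw [zero_add, sum_range_one, Nat.choose_self, Nat.cast_one, one_mul, ← sub_one_mul,
      sub_one_mul_qb_zero hQ]
    simp
  · rw [sum_range_succ, Nat.choose_self, Nat.cast_one, one_mul, if_neg n.succ_ne_zero, add_zero]
    linear_combination sub_one_mul_qb_succ (M := M) hQ n

variable [Algebra ℚ R]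

theorem egf_qb (hQ : IsUnit (Q - 1)) : (C Q * exp R - 1) * egf (qb Q M) = X + C M := by
  have hexp : exp R = egf fun _ => 1 := by simpa using (egf_pow (1 : R)).symm
  rw [sub_mul, mul_assoc, mul_comm (exp R), hexp, ← egf_binomial_sum, one_mul]
  ext n
  simp only [mul_one, map_sub, coeff_C_mul, coeff_egf, map_add, coeff_X, coeff_C]
  rw [mul_left_comm, ← mul_sub, qb_recurrence hQ]
  rcases n with _ | _ | n <;> simp

theorem egf_qB (x : R) : egf (fun n => qB Q M n x) = egf (qb Q M) * rescale x (exp R) := by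
  rw [← egf_pow, ← egf_binomial_sum]
  rfl

end QBernoulli

theorem PowerSeries.rescale_C {R : Type*} [CommRing R] (c r : R) : rescale c (C r) = C r := by
  ext n
  rcases n with _ | n <;> simp [coeff_C]

section DoubleSum
variable {R : Type*} [CommRing R] [Algebra ℚ R]

theorem egf_const_mul (r : R) (a : ℕ → R) : egf (fun n => r * a n) = C r * egf a := by
  rw [← smul_eq_C_mul, ← map_smul]
  rfl

theorem egf_finsetSum {ι : Type*} (s : Finset ι) (a : ι → ℕ → R) :
    egf (fun n => ∑ i ∈ s, a i n) = ∑ i ∈ s, egf (a i) := by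
  rw [← map_sum]
  congr 1
  ext n
  simp

theorem C_mul_exp_pow (q : R) (c : ℕ) :
    (C q * exp R) ^ c = C (q ^ c) * rescale (c : R) (exp R) := by
  rw [mul_pow, map_pow, exp_pow_eq_rescale_exp]

theorem isUnit_C_mul_exp_pow_sub_one {q : R} {c : ℕ} (hc : IsUnit (q ^ c - 1)) :
    IsUnit ((C q * exp R) ^ c - 1) :=
  isUnit_iff_constantCoeff.mpr (by simpa using hc)

theorem sub_one_mul_rescale_egf_qb (q L : R) {b : ℕ} (hb : IsUnit (q ^ b - 1)) :
    ((C q * exp R) ^ b - 1) * rescale (b : R) (egf (qb (q ^ b) (b * L))) =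
      C (b : R) * (X + C L) := by
  have h := congrArg (rescale (b : R)) (egf_qb (M := (b : R) * L) hb)
  rw [map_mul, map_sub, map_mul, rescale_C, map_one, map_add, rescale_X, rescale_C] at h
  rw [C_mul_exp_pow, h, map_mul]
  ring

theorem egf_pow_mul_qB (q L x : R) (b : ℕ) :
    egf (fun n => (b : R) ^ n * qB (q ^ b) (b * L) n x) =
      rescale (b : R) (egf (qb (q ^ b) (b * L))) * rescale (b * x) (exp R) := by
  rw [egf_pow_mul, egf_qB, map_mul, rescale_rescale, mul_comm x]

theorem natCast_mul_add_algebraMap_div_add_div (y : R) {a b : ℕ} (ha : 0 < a) (hb : 0 < b)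
    (c i j : ℕ) :
    ((a * b : ℕ) : R) *
        ((c : R) * y + algebraMap ℚ R ((c : ℚ) * (i : ℚ) / (a : ℚ) + (c : ℚ) * (j : ℚ) / (b : ℚ))) =
      ((a * b * c : ℕ) : R) * y + ((b * c * i : ℕ) : R) + ((a * c * j : ℕ) : R) := by
  have hrat : ((a * b : ℕ) : ℚ) * ((c : ℚ) * (i : ℚ) / (a : ℚ) + (c : ℚ) * (j : ℚ) / (b : ℚ)) =
      ((b * c * i : ℕ) : ℚ) + ((a * c * j : ℕ) : ℚ) := by
    push_cast
    field_simp
  have hR : ((a * b : ℕ) : R) *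
      algebraMap ℚ R ((c : ℚ) * (i : ℚ) / (a : ℚ) + (c : ℚ) * (j : ℚ) / (b : ℚ)) =
        ((b * c * i : ℕ) : R) + ((a * c * j : ℕ) : R) := by
    rw [← map_natCast (algebraMap ℚ R), ← map_mul, hrat, map_add, map_natCast, map_natCast]
  rw [mul_add, hR]
  push_cast
  ring

noncomputable def qBDoubleSum (q L y : R) (a b c n : ℕ) : R :=
  (c : R) * ((a : R) * (b : R)) ^ n * ∑ i ∈ range a, ∑ j ∈ range b,
    q ^ (b * c * i + a * c * j) * qB (q ^ (a * b)) (((a * b : ℕ) : R) * L) n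
      ((c : R) * y + algebraMap ℚ R ((c : ℚ) * (i : ℚ) / (a : ℚ) + (c : ℚ) * (j : ℚ) / (b : ℚ)))

theorem egf_qBDoubleSum (q L y : R) {a b : ℕ} (ha : 0 < a) (hb : 0 < b) (c : ℕ) :
    egf (qBDoubleSum q L y a b c) =
      C (c : R) * rescale ((a * b : ℕ) : R) (egf (qb (q ^ (a * b)) ((a * b : ℕ) * L))) *
        rescale ((a * b * c : ℕ) * y) (exp R) *
        ((∑ i ∈ range a, ((C q * exp R) ^ (b * c)) ^ i) *
          ∑ j ∈ range b, ((C q * exp R) ^ (a * c)) ^ j) := by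
  have hsum : qBDoubleSum q L y a b c = fun n => (c : R) * ∑ i ∈ range a, ∑ j ∈ range b,
      q ^ (b * c * i + a * c * j) *
        (((a * b : ℕ) : R) ^ n * qB (q ^ (a * b)) (((a * b : ℕ) : R) * L) n ((c : R) * y +
          algebraMap ℚ R ((c : ℚ) * (i : ℚ) / (a : ℚ) + (c : ℚ) * (j : ℚ) / (b : ℚ)))) := by
    ext n
    rw [qBDoubleSum, ← Nat.cast_mul, mul_assoc, mul_sum]
    congr 1
    refine sum_congr rfl fun i _ => ?_
    rw [mul_sum]
    exact sum_congr rfl fun j _ => by ring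
  rw [hsum, sum_mul_sum, mul_sum, egf_const_mul, egf_finsetSum, mul_sum]
  refine sum_congr rfl fun i _ => ?_
  rw [egf_finsetSum, mul_sum, mul_sum]
  refine sum_congr rfl fun j _ => ?_
  rw [egf_const_mul, egf_pow_mul_qB, natCast_mul_add_algebraMap_div_add_div y ha hb,
    ← exp_mul_exp_eq_exp_add, ← exp_mul_exp_eq_exp_add, ← exp_pow_eq_rescale_exp,
    ← exp_pow_eq_rescale_exp, ← pow_mul, ← pow_mul, mul_pow, mul_pow,
    ← map_pow, ← map_pow, pow_add, map_mul]
  ring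

theorem mul_egf_qBDoubleSum (q L y : R) {a b : ℕ} (ha : 0 < a) (hb : 0 < b) (c : ℕ)
    (hab : IsUnit (q ^ (a * b) - 1)) :
    ((C q * exp R) ^ (a * b) - 1) * ((C q * exp R) ^ (b * c) - 1) *
        ((C q * exp R) ^ (a * c) - 1) * egf (qBDoubleSum q L y a b c) =
      C ((a * b * c : ℕ) : R) * (X + C L) * rescale ((a * b * c : ℕ) * y) (exp R) *
        ((C q * exp R) ^ (a * b * c) - 1) ^ 2 := by
  have hgeom : ∀ m k : ℕ, (∑ i ∈ range m, ((C q * exp R) ^ k) ^ i) * ((C q * exp R) ^ k - 1) =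
      (C q * exp R) ^ (k * m) - 1 := fun m k => by rw [geom_sum_mul, pow_mul]
  rw [egf_qBDoubleSum q L y ha hb c]
  calc _ = C (c : R) * (((C q * exp R) ^ (a * b) - 1) *
          rescale ((a * b : ℕ) : R) (egf (qb (q ^ (a * b)) ((a * b : ℕ) * L)))) *
        rescale ((a * b * c : ℕ) * y) (exp R) *
        ((∑ i ∈ range a, ((C q * exp R) ^ (b * c)) ^ i) * ((C q * exp R) ^ (b * c) - 1)) *
        ((∑ j ∈ range b, ((C q * exp R) ^ (a * c)) ^ j) * ((C q * exp R) ^ (a * c) - 1)) := by ring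
    _ = _ := by
      rw [sub_one_mul_rescale_egf_qb q L hab, hgeom, hgeom, show b * c * a = a * b * c by ring,
        show a * c * b = a * b * c by ring]
      simp only [Nat.cast_mul, map_mul]
      ring

theorem qBDoubleSum_rotate (q L y : R) (hq : ∀ w : ℕ, 0 < w → IsUnit (q ^ w - 1)) {a b c : ℕ}
    (ha : 0 < a) (hb : 0 < b) (hc : 0 < c) :
    qBDoubleSum q L y a b c = qBDoubleSum q L y b c a := by
  have hunit : ∀ {k : ℕ}, 0 < k → IsUnit ((C q * exp R) ^ k - 1) := fun hk =>
    isUnit_C_mul_exp_pow_sub_one (hq _ hk)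
  have habc := mul_egf_qBDoubleSum q L y ha hb c (hq _ (Nat.mul_pos ha hb))
  have hbca := mul_egf_qBDoubleSum q L y hb hc a (hq _ (Nat.mul_pos hb hc))
  rw [show b * c * a = a * b * c by ring, show c * a = a * c by ring,
    show b * a = a * b by ring] at hbca
  apply egf_injective
  refine (((hunit (Nat.mul_pos ha hb)).mul (hunit (Nat.mul_pos hb hc))).mul
    (hunit (Nat.mul_pos ha hc))).mul_left_cancel ?_
  linear_combination habc - hbca

end DoubleSum

theorem symm_three_var_doublesum {R : Type*} [CommRing R] [Algebra ℚ R] (q L : R)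
    (hq : ∀ w : ℕ, 0 < w → IsUnit (q ^ w - 1)) (w1 w2 w3 : ℕ) (hw1 : 0 < w1) (hw2 : 0 < w2) (hw3 : 0 < w3) (y : R) (n : ℕ) :
    (w3 : R) * ((w1 : R) * (w2 : R)) ^ n * ∑ i ∈ Finset.range w1, ∑ j ∈ Finset.range w2,
        q ^ (w2 * w3 * i + w1 * w3 * j) *
          qB (q ^ (w1 * w2)) (((w1 * w2 : ℕ) : R) * L) n
            ((w3 : R) * y + algebraMap ℚ R ((w3 : ℚ) * (i : ℚ) / (w1 : ℚ) + (w3 : ℚ) * (j : ℚ) / (w2 : ℚ)))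
      = (w1 : R) * ((w2 : R) * (w3 : R)) ^ n * ∑ i ∈ Finset.range w2, ∑ j ∈ Finset.range w3,
          q ^ (w1 * w3 * i + w1 * w2 * j) *
            qB (q ^ (w2 * w3)) (((w2 * w3 : ℕ) : R) * L) n
              ((w1 : R) * y + algebraMap ℚ R ((w1 : ℚ) * (i : ℚ) / (w2 : ℚ) + (w1 : ℚ) * (j : ℚ) / (w3 : ℚ))) := by
  -- the right-hand side is `qBDoubleSum q L y w2 w3 w1 n` up to the order of the factors `w_i w_j`
  have h := congrFun (qBDoubleSum_rotate q L y hq hw1 hw2 hw3) n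
  simpa only [qBDoubleSum, mul_comm w3 w1, mul_comm w2 w1] using h
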